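/- Suppose l_m ≤ l_n + c₁ for all positive integers m ≤ n (for some constant c₁ ≥ 0), and suppose K := sup_{n ≥ 1} sup_{h ∈ [0, l_n]} inf_{m ≥ 1} Γ_{nm}(h) is finite. Then for every positive integer n with l_n > 2K + c₁, one has ∑_{k=n}^∞ e^{-l_k} ≤ K e^{K + c₁} e^{-l_n}. -/
import Mathlib


/-- For a real number `x`, its positive part `x₊ = max {x, 0}`. -/
noncomputable def ppart (x : ℝ) : ℝ := max x 0

/-- `Δ(k) = e^{-l_k} + e^{-l_{k+1}} + e^{-(1/2)(l_k + l_{k+1} - r_k)₊} + (r_k - l_k - l_{k+1})₊`. -/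
noncomputable def DeltaF (l r : ℕ → ℝ) (k : ℕ) : ℝ :=
  Real.exp (-l k) + Real.exp (-l (k + 1)) +
    Real.exp (-(1/2) * ppart (l k + l (k + 1) - r k)) + ppart (r k - l k - l (k + 1))

/-- The function `Γ_{nm}(h)` associated to the sequences `{l_n}` and `{r_n}`. -/
noncomputable def GammaF (l r : ℕ → ℝ) (n m : ℕ) (h : ℝ) : ℝ :=
  if m < n then
    (if l m ≤ h then
      ppart (r m + h - l (m + 1)) + Real.exp h * ∑ k ∈ Finset.Icc (m + 1) (n - 1), DeltaF l r k
    else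
      l m - h + Real.exp h * ∑ k ∈ Finset.Icc m (n - 1), DeltaF l r k)
  else if m = n then min h (l n - h)
  else
    (if l m ≤ h then
      ppart (r (m - 1) + h - l (m - 1)) + Real.exp h * ∑ k ∈ Finset.Icc n (m - 2), DeltaF l r k
    else
      l m - h + Real.exp h * ∑ k ∈ Finset.Icc n (m - 1), DeltaF l r k)

/-- `A_n(h)`: the largest positive integer `m < n` with `l_m ≤ h`, or `1` if there is none. -/
noncomputable def AFun (l : ℕ → ℝ) (n : ℕ) (h : ℝ) : ℕ :=
  sSup ({1} ∪ {m : ℕ | 1 ≤ m ∧ m < n ∧ l m ≤ h})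

/-- `B_n(h)`: the smallest integer `m > n` with `l_m ≤ h`, or `∞` if there is none. -/
noncomputable def BFun (l : ℕ → ℝ) (n : ℕ) (h : ℝ) : ℕ∞ :=
  sInf {x : ℕ∞ | ∃ m : ℕ, x = (m : ℕ∞) ∧ n < m ∧ l m ≤ h}

/-- `inf_{m ≥ 1} Γ_{nm}(h)`. -/
noncomputable def infGammaF (l r : ℕ → ℝ) (n : ℕ) (h : ℝ) : ℝ :=
  sInf {x : ℝ | ∃ m : ℕ, 1 ≤ m ∧ x = GammaF l r n m h}

/-- The set whose supremum is `K = sup_{n ≥ 1} sup_{h ∈ [0, l_n]} inf_{m ≥ 1} Γ_{nm}(h)`. -/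
def KSetF (l r : ℕ → ℝ) : Set ℝ :=
  {x : ℝ | ∃ n : ℕ, 1 ≤ n ∧ ∃ h : ℝ, 0 ≤ h ∧ h ≤ l n ∧ x = infGammaF l r n h}

lemma ppart_nonneg' (x : ℝ) : 0 ≤ ppart x := le_max_right x 0

lemma deltaF_nonneg' (l r : ℕ → ℝ) (k : ℕ) : 0 ≤ DeltaF l r k := by
  unfold DeltaF
  have h1 := Real.exp_pos (-l k)
  have h2 := Real.exp_pos (-l (k + 1))
  have h3 := Real.exp_pos (-(1/2) * ppart (l k + l (k + 1) - r k))
  have h4 := ppart_nonneg' (r k - l k - l (k + 1))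
  linarith

lemma exp_le_deltaF' (l r : ℕ → ℝ) (k : ℕ) : Real.exp (-l k) ≤ DeltaF l r k := by
  unfold DeltaF
  have h2 := Real.exp_pos (-l (k + 1))
  have h3 := Real.exp_pos (-(1/2) * ppart (l k + l (k + 1) - r k))
  have h4 := ppart_nonneg' (r k - l k - l (k + 1))
  linarith

lemma sumDelta_nonneg' (l r : ℕ → ℝ) (s : Finset ℕ) : 0 ≤ ∑ k ∈ s, DeltaF l r k :=
  Finset.sum_nonneg fun k _ => deltaF_nonneg' l r k

lemma gammaF_nonneg' (l r : ℕ → ℝ) (n m : ℕ) (h : ℝ) (h0 : 0 ≤ h) (hh : h ≤ l n) :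
    0 ≤ GammaF l r n m h := by
  unfold GammaF
  have e := Real.exp_pos h
  split_ifs with h1 h2 h3 h4
  · have := sumDelta_nonneg' l r (Finset.Icc (m + 1) (n - 1))
    have := ppart_nonneg' (r m + h - l (m + 1))
    nlinarith
  · have := sumDelta_nonneg' l r (Finset.Icc m (n - 1))
    push_neg at h2
    nlinarith
  · exact le_min h0 (by linarith)
  · have := sumDelta_nonneg' l r (Finset.Icc n (m - 2))
    have := ppart_nonneg' (r (m - 1) + h - l (m - 1))
    nlinarith
  · have := sumDelta_nonneg' l r (Finset.Icc n (m - 1))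
    push_neg at h4
    nlinarith

/-- Suppose `l_m ≤ l_n + c₁` for all positive integers `m ≤ n` (with `c₁ ≥ 0`), and suppose
`K := sup_{n ≥ 1} sup_{h ∈ [0, l_n]} inf_{m ≥ 1} Γ_{nm}(h)` is finite. Then for every
positive integer `n` with `l_n > 2K + c₁`, one has `∑_{k=n}^∞ e^{-l_k} ≤ K e^{K + c₁} e^{-l_n}`
(stated via all partial sums, which is equivalent since the terms are positive). -/
theorem stmt13 (l r : ℕ → ℝ) (hl : ∀ n : ℕ, 1 ≤ n → 0 < l n)
    (hr : ∀ n : ℕ, 1 ≤ n → 0 ≤ r n) (c₁ : ℝ) (hc₁ : 0 ≤ c₁)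
    (hmono : ∀ m n : ℕ, 1 ≤ m → m ≤ n → l m ≤ l n + c₁)
    (hbdd : BddAbove (KSetF l r))
    (n : ℕ) (hn : 1 ≤ n) (hln : 2 * sSup (KSetF l r) + c₁ < l n) :
    ∀ n₀ : ℕ, ∑ k ∈ Finset.Icc n n₀, Real.exp (-l k) ≤
      sSup (KSetF l r) * Real.exp (sSup (KSetF l r) + c₁) * Real.exp (-l n) := by
  intro n₀
  set K : ℝ := sSup (KSetF l r) with hKdef
  -- K is nonnegative
  have hK0 : 0 ≤ K := by
    have hmem : infGammaF l r 1 0 ∈ KSetF l r :=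
      ⟨1, le_rfl, 0, le_rfl, (hl 1 le_rfl).le, rfl⟩
    have h1 : 0 ≤ infGammaF l r 1 0 := by
      apply Real.sInf_nonneg
      rintro x ⟨m, hm, rfl⟩
      exact gammaF_nonneg' l r 1 m 0 le_rfl (hl 1 le_rfl).le
    exact h1.trans (le_csSup hbdd hmem)
  set S : ℝ := ∑ k ∈ Finset.Icc n n₀, Real.exp (-l k) with hSdef
  set ε₀ : ℝ := (l n - 2 * K - c₁) / 2 with hε₀def
  have hε₀pos : 0 < ε₀ := by
    rw [hε₀def]; linarith
  -- main estimate for each small ε > 0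
  have main : ∀ ε : ℝ, 0 < ε → ε ≤ ε₀ → S ≤ (K + ε) * Real.exp (K + c₁ + ε - l n) := by
    intro ε hε hεle
    have hεle' : 2 * ε ≤ l n - 2 * K - c₁ := by
      rw [hε₀def] at hεle; linarith
    set h : ℝ := l n - c₁ - K - ε with hhdef
    have hKεh : K + ε ≤ h := by rw [hhdef]; linarith
    have h0 : 0 ≤ h := by linarith
    set n' : ℕ := max n₀ n + 1 with hn'def
    have hn₀n' : n₀ ≤ n' - 1 := by
      have := Nat.le_max_left n₀ n; omega
    have hnn' : n < n' := by
      have := Nat.le_max_right n₀ n; omega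
    have h1n' : 1 ≤ n' := by omega
    have hlower : ∀ m : ℕ, n ≤ m → l n - c₁ ≤ l m := by
      intro m hm
      linarith [hmono n m hn hm]
    have hhln' : h ≤ l n' := by
      have := hlower n' hnn'.le
      rw [hhdef]; linarith
    -- the infimum over m of Γ_{n'm}(h) is at most K
    have hinf : infGammaF l r n' h ≤ K :=
      le_csSup hbdd ⟨n', h1n', h, h0, hhln', rfl⟩
    have hlt : sInf {x : ℝ | ∃ m : ℕ, 1 ≤ m ∧ x = GammaF l r n' m h} < K + ε := by
      have : infGammaF l r n' h < K + ε := lt_of_le_of_lt hinf (by linarith)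
      exact this
    have hne0 : Set.Nonempty {x : ℝ | ∃ m : ℕ, 1 ≤ m ∧ x = GammaF l r n' m h} :=
      ⟨GammaF l r n' 1 h, 1, le_rfl, rfl⟩
    obtain ⟨x, hxmem, hxlt⟩ := exists_lt_of_csInf_lt hne0 hlt
    obtain ⟨m, hm1, rfl⟩ := hxmem
    -- key claim: for this m, exp h * S ≤ Γ_{n'm}(h)
    have key : Real.exp h * S ≤ GammaF l r n' m h := by
      have hchain : ∀ a b : ℕ, a ≤ n → n₀ ≤ b →
          S ≤ ∑ k ∈ Finset.Icc a b, DeltaF l r k := by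
        intro a b ha hb
        calc S ≤ ∑ k ∈ Finset.Icc n n₀, DeltaF l r k :=
              Finset.sum_le_sum fun k _ => exp_le_deltaF' l r k
          _ ≤ ∑ k ∈ Finset.Icc a b, DeltaF l r k :=
              Finset.sum_le_sum_of_subset_of_nonneg
                (Finset.Icc_subset_Icc ha hb) (fun i _ _ => deltaF_nonneg' l r i)
      rcases lt_trichotomy m n' with hmn' | hmn' | hmn'
      · by_cases hlm : l m ≤ h
        · -- l m ≤ h forces m < n
          have hmltn : m < n := by
            by_contra hc
            push_neg at hc
            have h5 := hlower m hc
            have hh2 : h = l n - c₁ - K - ε := hhdef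
            linarith
          have heq : GammaF l r n' m h =
              ppart (r m + h - l (m + 1)) +
                Real.exp h * ∑ k ∈ Finset.Icc (m + 1) (n' - 1), DeltaF l r k := by
            unfold GammaF; rw [if_pos hmn', if_pos hlm]
          rw [heq]
          have hc := hchain (m + 1) (n' - 1) hmltn hn₀n'
          have hp := ppart_nonneg' (r m + h - l (m + 1))
          have hmul := mul_le_mul_of_nonneg_left hc (Real.exp_nonneg h)
          linarith
        · push_neg at hlm
          rcases le_or_gt m n with hmn | hmn
          · have heq : GammaF l r n' m h =
                l m - h + Real.exp h * ∑ k ∈ Finset.Icc m (n' - 1), DeltaF l r k := by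
              unfold GammaF; rw [if_pos hmn', if_neg (not_le.mpr hlm)]
            rw [heq]
            have hc := hchain m (n' - 1) hmn hn₀n'
            have hmul := mul_le_mul_of_nonneg_left hc (Real.exp_nonneg h)
            linarith
          · -- n < m < n' : excluded, Γ ≥ K + ε
            exfalso
            have hlb := hlower m hmn.le
            have heq : GammaF l r n' m h =
                l m - h + Real.exp h * ∑ k ∈ Finset.Icc m (n' - 1), DeltaF l r k := by
              unfold GammaF; rw [if_pos hmn', if_neg (not_le.mpr hlm)]
            rw [heq] at hxlt
            have hs := sumDelta_nonneg' l r (Finset.Icc m (n' - 1))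
            have hh2 : h = l n - c₁ - K - ε := hhdef
            nlinarith [Real.exp_pos h]
      · -- m = n' : excluded
        exfalso
        have heq : GammaF l r n' m h = min h (l n' - h) := by
          unfold GammaF
          rw [if_neg (by omega : ¬ m < n'), if_pos hmn']
        rw [heq] at hxlt
        have ha : K + ε ≤ h := hKεh
        have hb : K + ε ≤ l n' - h := by
          have h5 := hlower n' hnn'.le
          have hh2 : h = l n - c₁ - K - ε := hhdef
          linarith
        have := le_min ha hb
        linarith
      · -- m > n' : excluded
        exfalso
        have hnm : n ≤ m := by omega
        have hlb := hlower m hnm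
        by_cases hlm : l m ≤ h
        · have hh2 : h = l n - c₁ - K - ε := hhdef
          linarith
        · push_neg at hlm
          have heq : GammaF l r n' m h =
              l m - h + Real.exp h * ∑ k ∈ Finset.Icc n' (m - 1), DeltaF l r k := by
            unfold GammaF
            rw [if_neg (by omega : ¬ m < n'), if_neg (by omega : ¬ m = n'),
              if_neg (not_le.mpr hlm)]
          rw [heq] at hxlt
          have hs := sumDelta_nonneg' l r (Finset.Icc n' (m - 1))
          have hh2 : h = l n - c₁ - K - ε := hhdef
          nlinarith [Real.exp_pos h]
    -- conclude
    have hexp : Real.exp h * S < K + ε := lt_of_le_of_lt key hxlt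
    have hS' : S ≤ (K + ε) * Real.exp (-h) := by
      have h1 : Real.exp (-h) * (Real.exp h * S) ≤ Real.exp (-h) * (K + ε) :=
        mul_le_mul_of_nonneg_left hexp.le (Real.exp_nonneg (-h))
      have h2 : Real.exp (-h) * (Real.exp h * S) = S := by
        rw [← mul_assoc, ← Real.exp_add]
        simp
      rw [h2, mul_comm] at h1
      exact h1
    have harg : -h = K + c₁ + ε - l n := by rw [hhdef]; ring
    rw [harg] at hS'
    exact hS'
  -- take ε → 0⁺
  by_contra hcon
  push_neg at hcon
  have hf0 : K * Real.exp (K + c₁) * Real.exp (-l n) =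
      (K + 0) * Real.exp (K + c₁ + 0 - l n) := by
    rw [mul_assoc, ← Real.exp_add, add_zero]
    ring_nf
  set f : ℝ → ℝ := fun ε => (K + ε) * Real.exp (K + c₁ + ε - l n) with hfdef
  have hcont : Continuous f := by
    apply Continuous.mul
    · exact continuous_const.add continuous_id
    · exact Real.continuous_exp.comp
        (((continuous_const.add continuous_id).sub continuous_const))
  have htend : Filter.Tendsto f (nhdsWithin 0 (Set.Ioi 0)) (nhds (f 0)) :=
    (hcont.tendsto 0).mono_left nhdsWithin_le_nhds
  have hf0lt : f 0 < S := by
    have : f 0 = K * Real.exp (K + c₁) * Real.exp (-l n) := by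
      rw [hfdef]; simp only; rw [hf0]
    rw [this]
    exact hcon
  have h1 : ∀ᶠ ε in nhdsWithin 0 (Set.Ioi 0), f ε < S :=
    htend.eventually_lt_const hf0lt
  have h2 : ∀ᶠ ε in nhdsWithin 0 (Set.Ioi 0), (0:ℝ) < ε :=
    eventually_mem_nhdsWithin
  have h3 : ∀ᶠ ε in nhdsWithin 0 (Set.Ioi 0), ε < ε₀ := by
    have : Set.Iio ε₀ ∈ nhds (0:ℝ) := Iio_mem_nhds hε₀pos
    exact Filter.Eventually.filter_mono nhdsWithin_le_nhds this
  obtain ⟨ε, hfε, hε0, hεlt⟩ := (h1.and (h2.and h3)).exists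
  have hfε' : (K + ε) * Real.exp (K + c₁ + ε - l n) < S := hfε
  have := main ε hε0 hεlt.le
  linarith
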